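/- Let R ⊂ S^d be a reduced spherically convex body. Then Δ(R) > π/2 if and only if diam(R) > π/2. -/

import Mathlib

open scoped RealInnerProductSpace

noncomputable section

namespace SphericalGeom

/-- Euclidean space `E^n`. -/
abbrev Esp (n : ℕ) : Type := EuclideanSpace ℝ (Fin n)

/-- The unit sphere centered at the origin of `E^n` (so `S^d` for `n = d+1`). -/
def unitSphere (n : ℕ) : Set (Esp n) := Metric.sphere 0 1

/-- Spherical (geodesic) distance between points of the unit sphere. -/
def sdist {n : ℕ} (a b : Esp n) : ℝ := Real.arccos ⟪a, b⟫

/-- The hemisphere `H(c)` with center `c`: points of the sphere within spherical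
distance `π/2` from `c`. -/
def hemi {n : ℕ} (c : Esp n) : Set (Esp n) :=
  {x ∈ unitSphere n | sdist c x ≤ Real.pi / 2}

/-- The boundary great subsphere of the hemisphere centered at `c`. -/
def hemiBd {n : ℕ} (c : Esp n) : Set (Esp n) :=
  {x ∈ unitSphere n | sdist c x = Real.pi / 2}

/-- The spherical arc connecting `a` and `b` (for non-antipodal `a b` of the sphere,
this is the shorter great-circle arc joining them). -/
def arc {n : ℕ} (a b : Esp n) : Set (Esp n) :=
  {z | ∃ s t : ℝ, 0 ≤ s ∧ 0 ≤ t ∧ s • a + t • b ≠ 0 ∧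
    z = ‖s • a + t • b‖⁻¹ • (s • a + t • b)}

/-- A subset of the sphere, containing no pair of antipodes, which together with
every two of its points contains the arc connecting them. -/
def IsSphConvex {n : ℕ} (C : Set (Esp n)) : Prop :=
  C ⊆ unitSphere n ∧ (∀ x ∈ C, -x ∉ C) ∧ ∀ a ∈ C, ∀ b ∈ C, arc a b ⊆ C

/-- A spherically convex body: a closed spherically convex set with nonempty
interior relative to the sphere. -/
def IsSphConvexBody {n : ℕ} (C : Set (Esp n)) : Prop :=
  IsClosed C ∧ IsSphConvex C ∧
    ∃ x ∈ C, ∃ ε : ℝ, 0 < ε ∧ Metric.ball x ε ∩ unitSphere n ⊆ C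

/-- The hemisphere centered at `k` supports `C`: it contains `C` and its boundary
meets `C`. -/
def Supports {n : ℕ} (k : Esp n) (C : Set (Esp n)) : Prop :=
  k ∈ unitSphere n ∧ C ⊆ hemi k ∧ ∃ p ∈ C, sdist k p = Real.pi / 2

/-- The hemispheres centered at `g` and `h` are different and not opposite, so that
`H(g) ∩ H(h)` is a lune. -/
def IsLunePair {n : ℕ} (g h : Esp n) : Prop :=
  g ∈ unitSphere n ∧ h ∈ unitSphere n ∧ g ≠ h ∧ g ≠ -h

/-- The center of the bounding `(d-1)`-dimensional hemisphere `H(g)/H(h)` of the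
lune `H(g) ∩ H(h)`: the normalized projection of `h` onto the hyperplane `g^⊥`. -/
def luneFaceCenter {n : ℕ} (g h : Esp n) : Esp n :=
  ‖h - ⟪g, h⟫ • g‖⁻¹ • (h - ⟪g, h⟫ • g)

/-- The thickness of the lune `H(g) ∩ H(h)`: the spherical distance between the
centers of its two bounding hemispheres. -/
def luneThickness {n : ℕ} (g h : Esp n) : ℝ :=
  sdist (luneFaceCenter g h) (luneFaceCenter h g)

/-- The set of corners of the lune `H(g) ∩ H(h)`, i.e. `(G/H) ∩ (H/G)`. -/
def luneCorners {n : ℕ} (g h : Esp n) : Set (Esp n) := hemiBd g ∩ hemiBd h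

/-- The width of `C` determined by the supporting hemisphere `H(k)`: the minimum
thickness of a lune `H(k) ∩ K'` over all hemispheres `K' ≠ H(k)` supporting `C`. -/
def widthAt {n : ℕ} (C : Set (Esp n)) (k : Esp n) : ℝ :=
  sInf {t | ∃ k', Supports k' C ∧ k' ≠ k ∧ k' ≠ -k ∧ t = luneThickness k k'}

/-- The thickness `Δ(C)`: the minimum of `width_K(C)` over supporting hemispheres. -/
def thickness {n : ℕ} (C : Set (Esp n)) : ℝ :=
  sInf {t | ∃ k, Supports k C ∧ t = widthAt C k}

/-- The spherical diameter: the maximum spherical distance of two points of `C`. -/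
def sdiam {n : ℕ} (C : Set (Esp n)) : ℝ :=
  sSup {t | ∃ p ∈ C, ∃ q ∈ C, t = sdist p q}

/-- `C` is of constant width `w`. -/
def IsConstWidth {n : ℕ} (C : Set (Esp n)) (w : ℝ) : Prop :=
  ∀ k, Supports k C → widthAt C k = w

/-- A reduced body: every convex body properly contained in it has strictly
smaller thickness. -/
def IsReduced {n : ℕ} (R : Set (Esp n)) : Prop :=
  IsSphConvexBody R ∧ ∀ Z : Set (Esp n), IsSphConvexBody Z → Z ⊆ R → Z ≠ R →
    thickness Z < thickness R

/-- `e` is an extreme point of the convex body `C`: `C \ {e}` is convex. -/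
def IsExtremePt {n : ℕ} (C : Set (Esp n)) (e : Esp n) : Prop :=
  e ∈ C ∧ IsSphConvex (C \ {e})

/-- The boundary of `C` relative to the sphere. -/
def sphBoundary {n : ℕ} (C : Set (Esp n)) : Set (Esp n) :=
  closure C ∩ closure (unitSphere n \ C)

/-- `D` is of constant diameter `δ`: its diameter equals `δ` and every boundary
point realizes the distance `δ` to some boundary point. -/
def IsConstDiameter {n : ℕ} (D : Set (Esp n)) (δ : ℝ) : Prop :=
  sdiam D = δ ∧ ∀ p ∈ sphBoundary D, ∃ p' ∈ sphBoundary D, sdist p p' = δ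

end SphericalGeom

open SphericalGeom Real

/-!
Write `H(k)` for the hemisphere centred at `k`. For unit normals `g ≠ ±h` the lune `H(g) ∩ H(h)`
has thickness `arccos (-⟪g, h⟫)`, so both directions are statements about inner products.

If `⟪x, y⟫ ≥ 0` on `R` (i.e. `diam R ≤ π/2`), take a diametral pair `p, q` with `⟪p, q⟫ = c`:
the hemispheres centred at the normalised projections of `q` onto `p^⊥` and of `p` onto `q^⊥`
support `R` and bound a lune of thickness `arccos c ≤ π/2`.

Conversely let `Δ(R) ≤ π/2` and `⟪p, q⟫ < 0` for some `p, q ∈ R`. Then `Z = R ∩ H(p)` is a convex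
body properly contained in `R`, and we show `Δ(Z) ≥ Δ(R)`, contradicting reducedness. Minimising
`⟪u, u'⟫` over unit `u, u'` with `R ⊆ H(u), H(u')` gives two supporting hemispheres, whence
`⟪u, u'⟫ ≥ -cos Δ(R)`. A hemisphere `H(k) ⊇ Z` has `k = ν + b p` with `b ≥ 0`, `‖ν‖ ≤ 1` and
`R ⊆ H(ν)`, so any two of them satisfy `⟪k, k'⟫ ≥ ⟪ν, ν'⟫ ≥ -cos Δ(R)`: every lune containing `Z`
is at least `Δ(R)` thick.
-/

namespace SphericalGeom

open Filter Topology ProperCone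

variable {n : ℕ} {C : Set (Esp n)} {g h p q : Esp n}

lemma mem_unitSphere_iff {x : Esp n} : x ∈ unitSphere n ↔ ‖x‖ = 1 :=
  mem_sphere_zero_iff_norm

lemma mem_hemi_iff {c x : Esp n} : x ∈ hemi c ↔ ‖x‖ = 1 ∧ 0 ≤ ⟪x, c⟫ :=
  and_congr mem_unitSphere_iff (by rw [sdist, arccos_le_pi_div_two, real_inner_comm])

lemma mem_hemi_self (hp : ‖p‖ = 1) : p ∈ hemi p :=
  mem_hemi_iff.mpr ⟨hp, real_inner_self_nonneg⟩

lemma isClosed_hemi (c : Esp n) : IsClosed (hemi c) := by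
  have : hemi c = unitSphere n ∩ (fun x => ⟪x, c⟫) ⁻¹' Set.Ici 0 := by
    ext x; simp [mem_hemi_iff, mem_unitSphere_iff]
  rw [this]
  exact Metric.isClosed_sphere.inter (isClosed_Ici.preimage (by fun_prop))

lemma subset_hemi_iff (hC : C ⊆ unitSphere n) {k : Esp n} :
    C ⊆ hemi k ↔ k ∈ innerDual C := by
  simp only [Set.subset_def, mem_hemi_iff, mem_innerDual]
  exact ⟨fun h x hx => (h x hx).2, fun h x hx => ⟨mem_unitSphere_iff.mp (hC hx), h hx⟩⟩

lemma supports_iff (hC : C ⊆ unitSphere n) {k : Esp n} :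
    Supports k C ↔ ‖k‖ = 1 ∧ k ∈ innerDual C ∧ ∃ x ∈ C, ⟪x, k⟫ = 0 := by
  simp only [Supports, mem_unitSphere_iff, subset_hemi_iff hC, sdist, real_inner_comm k,
    arccos_eq_pi_div_two]

lemma inv_norm_smul_mem_innerDual {w : Esp n} (hw : w ∈ innerDual C) :
    ‖w‖⁻¹ • w ∈ innerDual C :=
  mem_innerDual.mpr fun x hx => by
    rw [real_inner_smul_right]; exact mul_nonneg (by positivity) (hw hx)

lemma supports_smul_inv_norm (hC : C ⊆ unitSphere n) {w x : Esp n}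
    (hw : w ≠ 0) (hwC : w ∈ innerDual C) (hx : x ∈ C) (hxw : ⟪x, w⟫ = 0) :
    Supports (‖w‖⁻¹ • w) C := by
  refine (supports_iff hC).mpr ⟨norm_smul_inv_norm hw, mem_innerDual.mpr fun y hy => ?_, x, hx, ?_⟩
  · rw [real_inner_smul_right]; exact mul_nonneg (by positivity) (hwC hy)
  · rw [real_inner_smul_right, hxw, mul_zero]

lemma mem_arc_of_add_eq_smul {a b z : Esp n} {s t c : ℝ} (hs : 0 ≤ s) (ht : 0 ≤ t) (hc : 0 < c)
    (hz : ‖z‖ = 1) (h : s • a + t • b = c • z) : z ∈ arc a b := by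
  have hcz : ‖c • z‖ = c := by rw [norm_smul, hz, mul_one, Real.norm_of_nonneg hc.le]
  refine ⟨s, t, hs, ht, ?_, ?_⟩
  · rw [h, ← norm_ne_zero_iff, hcz]; exact hc.ne'
  · rw [h, hcz, smul_smul, inv_mul_cancel₀ hc.ne', one_smul]

lemma arc_subset_hemi {a b : Esp n} (ha : a ∈ hemi p) (hb : b ∈ hemi p) : arc a b ⊆ hemi p := by
  rintro _ ⟨s, t, hs, ht, hne, rfl⟩
  refine mem_hemi_iff.mpr ⟨norm_smul_inv_norm hne, ?_⟩
  rw [real_inner_smul_left, inner_add_left, real_inner_smul_left, real_inner_smul_left]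
  have := (mem_hemi_iff.mp ha).2
  have := (mem_hemi_iff.mp hb).2
  positivity

lemma eq_or_eq_neg_of_eq_smul {v : Esp n} {c : ℝ} (hv : ‖v‖ = 1) (hp : ‖p‖ = 1)
    (h : v = c • p) : v = p ∨ v = -p := by
  have hc : |c| = 1 := by rw [← hv, h, norm_smul, hp, mul_one, Real.norm_eq_abs]
  rcases abs_eq (zero_le_one' ℝ) |>.mp hc with rfl | rfl
  · left; rw [h, one_smul]
  · right; rw [h, neg_one_smul]

lemma abs_inner_lt_one_iff (hg : ‖g‖ = 1) (hh : ‖h‖ = 1) :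
    |⟪g, h⟫| < 1 ↔ h ≠ g ∧ h ≠ -g := by
  rw [abs_lt, inner_lt_one_iff_real_of_norm_eq_one hg hh,
    (neg_one_le_real_inner_of_norm_eq_one hg hh).lt_iff_ne', Ne,
    inner_eq_neg_one_iff_of_norm_eq_one hg hh, ← neg_eq_iff_eq_neg, eq_comm (a := -g)]
  exact ⟨fun ⟨h1, h2⟩ => ⟨Ne.symm h2, h1⟩, fun ⟨h1, h2⟩ => ⟨h2, Ne.symm h1⟩⟩

lemma norm_sub_inner_smul_sq (hg : ‖g‖ = 1) (hh : ‖h‖ = 1) :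
    ‖h - ⟪g, h⟫ • g‖ ^ 2 = 1 - ⟪g, h⟫ ^ 2 := by
  rw [norm_sub_sq_real, real_inner_smul_right, real_inner_comm g h, norm_smul, Real.norm_eq_abs,
    hg, hh, mul_one, sq_abs]
  ring

lemma sub_inner_smul_ne_zero (hg : ‖g‖ = 1) (hh : ‖h‖ = 1) (hgh : |⟪g, h⟫| < 1) :
    h - ⟪g, h⟫ • g ≠ 0 := by
  intro h0
  have := norm_sub_inner_smul_sq hg hh
  rw [h0, norm_zero] at this
  nlinarith [abs_nonneg ⟪g, h⟫, sq_abs ⟪g, h⟫]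

lemma norm_luneFaceCenter (hg : ‖g‖ = 1) (hh : ‖h‖ = 1) (hgh : |⟪g, h⟫| < 1) :
    ‖luneFaceCenter g h‖ = 1 :=
  norm_smul_inv_norm (sub_inner_smul_ne_zero hg hh hgh)

lemma inner_luneFaceCenter_eq_zero (hg : ‖g‖ = 1) (h : Esp n) : ⟪g, luneFaceCenter g h⟫ = 0 := by
  rw [luneFaceCenter, real_inner_smul_right, inner_sub_right, real_inner_smul_right,
    real_inner_self_eq_norm_sq, hg]
  ring

lemma inner_luneFaceCenter (hg : ‖g‖ = 1) (hh : ‖h‖ = 1) (hgh : |⟪g, h⟫| < 1) :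
    ⟪luneFaceCenter g h, luneFaceCenter h g⟫ = -⟪g, h⟫ := by
  have hN : ‖g - ⟪h, g⟫ • h‖ = ‖h - ⟪g, h⟫ • g‖ := by
    rw [← sq_eq_sq₀ (norm_nonneg _) (norm_nonneg _), norm_sub_inner_smul_sq hh hg,
      norm_sub_inner_smul_sq hg hh, real_inner_comm]
  have hN2 := norm_sub_inner_smul_sq hg hh
  have hpos : 0 < 1 - ⟪g, h⟫ ^ 2 := by nlinarith [abs_nonneg ⟪g, h⟫, sq_abs ⟪g, h⟫]
  have hnum : ⟪h - ⟪g, h⟫ • g, g - ⟪h, g⟫ • h⟫ = -⟪g, h⟫ * (1 - ⟪g, h⟫ ^ 2) := by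
    simp only [inner_sub_left, inner_sub_right, real_inner_smul_left, real_inner_smul_right,
      real_inner_comm g h, real_inner_self_eq_norm_sq, hg, hh]
    ring
  rw [luneFaceCenter, luneFaceCenter, real_inner_smul_left, real_inner_smul_right, hnum, hN,
    ← mul_assoc, ← mul_inv, ← sq, hN2, mul_comm, mul_assoc, mul_inv_cancel₀ hpos.ne', mul_one]

lemma luneThickness_eq (hg : ‖g‖ = 1) (hh : ‖h‖ = 1) (hgh : |⟪g, h⟫| < 1) :
    luneThickness g h = arccos (-⟪g, h⟫) := by
  rw [luneThickness, sdist, inner_luneFaceCenter hg hh hgh]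

lemma widthAt_nonneg (C : Set (Esp n)) (k : Esp n) : 0 ≤ widthAt C k :=
  Real.sInf_nonneg <| by rintro _ ⟨k', -, -, -, rfl⟩; exact arccos_nonneg _

lemma thickness_nonneg (C : Set (Esp n)) : 0 ≤ thickness C :=
  Real.sInf_nonneg <| by rintro _ ⟨k, -, rfl⟩; exact widthAt_nonneg C k

lemma thickness_le_widthAt {k : Esp n} (hk : Supports k C) : thickness C ≤ widthAt C k :=
  csInf_le ⟨0, by rintro _ ⟨k, -, rfl⟩; exact widthAt_nonneg C k⟩ ⟨k, hk, rfl⟩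

lemma thickness_le_luneThickness {k k' : Esp n} (hk : Supports k C) (hk' : Supports k' C)
    (hne : k' ≠ k) (hne' : k' ≠ -k) : thickness C ≤ luneThickness k k' :=
  (thickness_le_widthAt hk).trans <|
    csInf_le ⟨0, by rintro _ ⟨k', -, -, -, rfl⟩; exact arccos_nonneg _⟩ ⟨k', hk', hne, hne', rfl⟩

lemma le_thickness {a : ℝ} (hpair : ∀ k, Supports k C → ∃ k', Supports k' C ∧ k' ≠ k ∧ k' ≠ -k)
    (hex : ∃ k, Supports k C)
    (h : ∀ k k', Supports k C → Supports k' C → k' ≠ k → k' ≠ -k → a ≤ luneThickness k k') :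
    a ≤ thickness C := by
  obtain ⟨k₀, hk₀⟩ := hex
  refine le_csInf ⟨_, k₀, hk₀, rfl⟩ ?_
  rintro _ ⟨k, hk, rfl⟩
  obtain ⟨k', hk', hne, hne'⟩ := hpair k hk
  refine le_csInf ⟨_, k', hk', hne, hne', rfl⟩ ?_
  rintro _ ⟨k', hk', hne, hne', rfl⟩
  exact h k k' hk hk' hne hne'

lemma exists_supports_pair_of_thickness_pos (hC : 0 < thickness C) :
    ∃ k k', Supports k C ∧ Supports k' C ∧ k' ≠ k ∧ k' ≠ -k := by
  obtain ⟨_, k, hk, rfl⟩ : {t | ∃ k, Supports k C ∧ t = widthAt C k}.Nonempty :=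
    Set.nonempty_iff_ne_empty.mpr fun h => by simp [thickness, h] at hC
  have hw : 0 < widthAt C k := hC.trans_le (thickness_le_widthAt hk)
  obtain ⟨_, k', hk', hne, hne', rfl⟩ :
      {t | ∃ k', Supports k' C ∧ k' ≠ k ∧ k' ≠ -k ∧ t = luneThickness k k'}.Nonempty :=
    Set.nonempty_iff_ne_empty.mpr fun h => by simp [widthAt, h] at hw
  exact ⟨k, k', hk, hk', hne, hne'⟩

lemma sdist_le_sdiam {x y : Esp n} (hx : x ∈ C) (hy : y ∈ C) : sdist x y ≤ sdiam C :=
  le_csSup ⟨π, by rintro _ ⟨a, -, b, -, rfl⟩; exact arccos_le_pi _⟩ ⟨x, hx, y, hy, rfl⟩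

lemma sdiam_le_pi_div_two_iff : sdiam C ≤ π / 2 ↔ ∀ x ∈ C, ∀ y ∈ C, 0 ≤ ⟪x, y⟫ := by
  refine ⟨fun h x hx y hy => arccos_le_pi_div_two.mp ?_, fun h => ?_⟩
  · exact (sdist_le_sdiam hx hy).trans h
  · refine Real.sSup_le ?_ (by positivity)
    rintro _ ⟨x, hx, y, hy, rfl⟩
    exact arccos_le_pi_div_two.mpr (h x hx y hy)

lemma IsSphConvexBody.isCompact (hC : IsSphConvexBody C) : IsCompact C :=
  (isCompact_sphere 0 1).of_isClosed_subset hC.1 hC.2.1.1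

lemma IsSphConvexBody.exists_inner_ne_zero (hC : IsSphConvexBody C) {w : Esp n} (hw : w ≠ 0) :
    ∃ x ∈ C, ⟪x, w⟫ ≠ 0 := by
  obtain ⟨x₀, hx₀, ε, hε, hball⟩ := hC.2.2
  by_cases h0 : ⟪x₀, w⟫ = 0
  swap
  · exact ⟨x₀, hx₀, h0⟩
  have hx₀n : ‖x₀‖ = 1 := mem_unitSphere_iff.mp (hC.2.1.1 hx₀)
  set γ : ℝ → Esp n := fun t => ‖x₀ + t • w‖⁻¹ • (x₀ + t • w)
  have hγ : Tendsto γ (𝓝 0) (𝓝 x₀) := by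
    have : ContinuousAt γ 0 :=
      ((continuous_norm.comp (by fun_prop)).continuousAt.inv₀ (by simp [hx₀n])).smul
        (by fun_prop)
    simpa [γ, hx₀n] using this.tendsto
  obtain ⟨t, hγt, ht⟩ := ((hγ.mono_left nhdsWithin_le_nhds).eventually
    (Metric.ball_mem_nhds x₀ hε)).and self_mem_nhdsWithin |>.exists (f := 𝓝[>] (0 : ℝ))
  have hinner : ⟪x₀ + t • w, w⟫ = t * ‖w‖ ^ 2 := by
    rw [inner_add_left, h0, real_inner_smul_left, real_inner_self_eq_norm_sq, zero_add]
  have hpos : 0 < t * ‖w‖ ^ 2 := mul_pos ht (by positivity)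
  have hne : x₀ + t • w ≠ 0 := fun h => by rw [h, inner_zero_left] at hinner; linarith
  refine ⟨γ t, hball ⟨hγt, mem_unitSphere_iff.mpr (norm_smul_inv_norm hne)⟩, ?_⟩
  rw [real_inner_smul_left, hinner]
  exact (mul_pos (by positivity) hpos).ne'

lemma IsSphConvexBody.exists_inner_pos (hC : IsSphConvexBody C) {w : Esp n} (hw : w ≠ 0)
    (hwC : w ∈ innerDual C) : ∃ x ∈ C, 0 < ⟪x, w⟫ :=
  let ⟨x, hx, hxw⟩ := hC.exists_inner_ne_zero hw
  ⟨x, hx, (hwC hx).lt_of_ne' hxw⟩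

lemma IsSphConvexBody.neg_one_lt_inner (hC : IsSphConvexBody C) {a b : Esp n} (ha : ‖a‖ = 1)
    (haC : a ∈ innerDual C) (hb : ‖b‖ = 1) (hbC : b ∈ innerDual C) : -1 < ⟪a, b⟫ := by
  obtain ⟨x, hx, hxb⟩ := hC.exists_inner_pos (ne_zero_of_norm_ne_zero (by simp [hb])) hbC
  refine (neg_one_le_real_inner_of_norm_eq_one ha hb).lt_of_ne' fun h => ?_
  have := mem_innerDual.mp haC hx
  rw [(inner_eq_neg_one_iff_of_norm_eq_one ha hb).mp h, inner_neg_right] at this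
  linarith

lemma IsSphConvexBody.exists_inner_lt_one (hn : 2 ≤ n) (hC : IsSphConvexBody C) :
    ∃ x ∈ C, ∃ y ∈ C, ⟪x, y⟫ < 1 := by
  obtain ⟨x₀, hx₀, -⟩ := hC.2.2
  have hx₀n : ‖x₀‖ = 1 := mem_unitSphere_iff.mp (hC.2.1.1 hx₀)
  have hx₀0 : x₀ ≠ 0 := ne_zero_of_norm_ne_zero (by simp [hx₀n])
  obtain ⟨w, hw, hw0⟩ : ∃ w ∈ (ℝ ∙ x₀)ᗮ, w ≠ 0 := by
    refine Submodule.exists_mem_ne_zero_of_ne_bot fun hbot => ?_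
    have := Submodule.finrank_add_finrank_orthogonal (ℝ ∙ x₀)
    rw [hbot, finrank_bot, finrank_span_singleton hx₀0, finrank_euclideanSpace_fin] at this
    omega
  obtain ⟨y, hy, hyw⟩ := hC.exists_inner_ne_zero hw0
  refine ⟨x₀, hx₀, y, hy, (inner_lt_one_iff_real_of_norm_eq_one hx₀n
    (mem_unitSphere_iff.mp (hC.2.1.1 hy))).mpr ?_⟩
  rintro rfl
  exact hyw (Submodule.mem_orthogonal_singleton_iff_inner_right.mp hw)

lemma IsSphConvexBody.exists_ball_subset_inter_hemi (hC : IsSphConvexBody C) (hp : p ∈ C) :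
    ∃ y ∈ C ∩ hemi p, ∃ ε, 0 < ε ∧ Metric.ball y ε ∩ unitSphere n ⊆ C ∩ hemi p := by
  obtain ⟨x₀, hx₀, ε, hε, hball⟩ := hC.2.2
  have hx₀n : ‖x₀‖ = 1 := mem_unitSphere_iff.mp (hC.2.1.1 hx₀)
  have hpn : ‖p‖ = 1 := mem_unitSphere_iff.mp (hC.2.1.1 hp)
  -- `y` lies on the arc from `x₀` to `p`; near `y`, the arcs from the ball around `x₀` to `p`
  -- cover a neighbourhood of `y`
  set u := x₀ + (2 : ℝ) • p
  have hup : 1 ≤ ⟪u, p⟫ := by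
    rw [inner_add_left, real_inner_smul_left, real_inner_self_eq_norm_sq, hpn]
    linarith [neg_one_le_real_inner_of_norm_eq_one hx₀n hpn]
  have hu : 0 < ‖u‖ := norm_pos_iff.mpr fun h => by rw [h, inner_zero_left] at hup; linarith
  set y := ‖u‖⁻¹ • u
  have hyp : 0 < ⟪y, p⟫ := by rw [real_inner_smul_left]; exact mul_pos (by positivity) (by linarith)
  set f : Esp n → Esp n := fun z => ‖u‖ • z - (2 : ℝ) • p
  have hfy : f y = x₀ := by simp only [f, y, smul_inv_smul₀ hu.ne', u, add_sub_cancel_right]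
  have hx₀0 : x₀ ≠ 0 := ne_zero_of_norm_ne_zero (by simp [hx₀n])
  have hf : Continuous f := by fun_prop
  have hφ : Tendsto (fun z => ‖f z‖⁻¹ • f z) (𝓝 y) (𝓝 x₀) := by
    have : ContinuousAt (fun z => ‖f z‖⁻¹ • f z) y :=
      ((continuous_norm.comp hf).continuousAt.inv₀ (by simp [hfy, hx₀n])).smul hf.continuousAt
    simpa [hfy, hx₀n] using this.tendsto
  have hev : ∀ᶠ z in 𝓝 y, ‖f z‖⁻¹ • f z ∈ Metric.ball x₀ ε ∧ f z ≠ 0 ∧ 0 < ⟪z, p⟫ :=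
    (hφ.eventually (Metric.ball_mem_nhds x₀ hε)).and <|
      (hf.continuousAt.eventually_ne (hfy ▸ hx₀0)).and <|
        (continuous_id.inner continuous_const).continuousAt.eventually_const_lt hyp
  obtain ⟨δ, hδ, hδev⟩ := Metric.eventually_nhds_iff.mp hev
  have hmem : ∀ z, ‖z‖ = 1 → 0 < ⟪z, p⟫ → z ∈ C → z ∈ C ∩ hemi p :=
    fun z hz hzp hzC => ⟨hzC, mem_hemi_iff.mpr ⟨hz, hzp.le⟩⟩
  refine ⟨y, hmem y (norm_smul_inv_norm (norm_pos_iff.mp hu)) hyp ?_, δ, hδ, ?_⟩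
  · refine hC.2.1.2.2 x₀ hx₀ p hp (mem_arc_of_add_eq_smul zero_le_one zero_le_two hu
      (norm_smul_inv_norm (norm_pos_iff.mp hu)) ?_)
    rw [one_smul, smul_inv_smul₀ hu.ne']
  · rintro z ⟨hz, hzs⟩
    obtain ⟨hφz, hfz, hzp⟩ := hδev hz
    have hzn : ‖z‖ = 1 := mem_unitSphere_iff.mp hzs
    refine hmem z hzn hzp (hC.2.1.2.2 _ (hball ⟨hφz, ?_⟩) p hp ?_)
    · exact mem_unitSphere_iff.mpr (norm_smul_inv_norm hfz)
    · refine mem_arc_of_add_eq_smul (norm_nonneg (f z)) zero_le_two hu hzn ?_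
      rw [smul_inv_smul₀ (norm_ne_zero_iff.mpr hfz), sub_add_cancel]

lemma IsSphConvexBody.inter_hemi (hC : IsSphConvexBody C) (hp : p ∈ C) :
    IsSphConvexBody (C ∩ hemi p) := by
  refine ⟨hC.1.inter (isClosed_hemi p),
    ⟨fun x hx => hC.2.1.1 hx.1, fun x hx h => hC.2.1.2.1 x hx.1 h.1,
    fun a ha b hb => Set.subset_inter (hC.2.1.2.2 a ha.1 b hb.1) (arc_subset_hemi ha.2 hb.2)⟩,
    hC.exists_ball_subset_inter_hemi hp⟩

/-- Tilting the hemisphere `H(v)` away from `p` until its boundary touches `C`. -/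
lemma exists_touching_sub_smul (hCs : C ⊆ unitSphere n) (hCc : IsCompact C) {v x₁ : Esp n}
    (hp : ‖p‖ = 1) (hvC : v ∈ innerDual C) (hx₁ : x₁ ∈ C) (hpx₁ : 0 < ⟪x₁, p⟫) :
    ∃ t : ℝ, 0 ≤ t ∧ v - t • p ∈ innerDual C ∧ ∃ x ∈ C, ⟪x, v - t • p⟫ = 0 := by
  set S := {t : ℝ | 0 ≤ t ∧ v - t • p ∈ innerDual C}
  have hS0 : (0 : ℝ) ∈ S := ⟨le_rfl, by rwa [zero_smul, sub_zero]⟩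
  have hSbdd : BddAbove S := by
    refine ⟨⟪x₁, v⟫ / ⟪x₁, p⟫, fun t ht => (le_div_iff₀ hpx₁).mpr ?_⟩
    have := mem_innerDual.mp ht.2 hx₁
    rw [inner_sub_right, real_inner_smul_right] at this
    linarith
  have hSclosed : IsClosed S := isClosed_Ici.inter ((innerDual C).isClosed.preimage (by fun_prop))
  set t₀ := sSup S
  have ht₀ : t₀ ∈ S := hSclosed.csSup_mem ⟨0, hS0⟩ hSbdd
  obtain ⟨x, hx, hmin⟩ := hCc.exists_isMinOn ⟨x₁, hx₁⟩
    (by fun_prop : Continuous fun x : Esp n => ⟪x, v - t₀ • p⟫).continuousOn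
  refine ⟨t₀, ht₀.1, ht₀.2, x, hx, ?_⟩
  by_contra hne
  set μ := ⟪x, v - t₀ • p⟫
  have hμ : 0 < μ := (ht₀.2 hx).lt_of_ne' hne
  have hmem : t₀ + μ ∈ S := by
    refine ⟨by linarith [ht₀.1], mem_innerDual.mpr fun y hy => ?_⟩
    have h1 : μ ≤ ⟪y, v - t₀ • p⟫ := isMinOn_iff.mp hmin y hy
    have h2 : ⟪y, p⟫ ≤ 1 := real_inner_le_one_of_norm_eq_one (mem_unitSphere_iff.mp (hCs hy)) hp
    have h3 : ⟪y, v - (t₀ + μ) • p⟫ = ⟪y, v - t₀ • p⟫ - μ * ⟪y, p⟫ := by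
      simp only [inner_sub_right, real_inner_smul_right]; ring
    nlinarith
  linarith [le_csSup hSbdd hmem]

lemma exists_supports_ne (hCs : C ⊆ unitSphere n) (hCc : IsCompact C) {v : Esp n} (hp : p ∈ C)
    (hv : ‖v‖ = 1) (hvC : v ∈ innerDual C) (hvp : v ≠ p) (hvp' : v ≠ -p) :
    ∃ w, Supports w C ∧ w ≠ p ∧ w ≠ -p := by
  have hpn : ‖p‖ = 1 := mem_unitSphere_iff.mp (hCs hp)
  obtain ⟨t, -, hw, x, hx, hx0⟩ := exists_touching_sub_smul hCs hCc hpn hvC hp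
    (by rw [real_inner_self_eq_norm_sq, hpn]; norm_num)
  have hpar : ∀ c : ℝ, v - t • p ≠ c • p := fun c h => by
    rcases eq_or_eq_neg_of_eq_smul hv hpn (show v = (t + c) • p by rw [add_smul, ← h]; abel)
      with h | h
    exacts [hvp h, hvp' h]
  have hne : v - t • p ≠ 0 := by simpa using hpar 0
  have hne' : ‖v - t • p‖ ≠ 0 := norm_ne_zero_iff.mpr hne
  refine ⟨_, supports_smul_inv_norm hCs hne hw hx hx0, fun h => hpar ‖v - t • p‖ ?_,
    fun h => hpar (-‖v - t • p‖) ?_⟩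
  · exact (smul_inv_smul₀ hne' _).symm.trans (congrArg _ h)
  · rw [neg_smul, ← smul_neg]
    exact (smul_inv_smul₀ hne' _).symm.trans (congrArg _ h)

lemma supports_luneFaceCenter (hCs : C ⊆ unitSphere n) (hp : p ∈ C) (hq : ‖q‖ = 1)
    (hpq : |⟪p, q⟫| < 1) (hpq₀ : 0 ≤ ⟪p, q⟫) (hmin : ∀ x ∈ C, ⟪p, q⟫ ≤ ⟪x, q⟫) :
    Supports (luneFaceCenter p q) C := by
  have hpn : ‖p‖ = 1 := mem_unitSphere_iff.mp (hCs hp)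
  refine supports_smul_inv_norm hCs (sub_inner_smul_ne_zero hpn hq hpq)
    (mem_innerDual.mpr fun x hx => ?_) hp ?_
  · have := real_inner_le_one_of_norm_eq_one (mem_unitSphere_iff.mp (hCs hx)) hpn
    rw [inner_sub_right, real_inner_smul_right]
    nlinarith [hmin x hx]
  · rw [inner_sub_right, real_inner_smul_right, real_inner_self_eq_norm_sq, hpn]
    ring

/-- If `H(a)` did not touch `C`, tilting it away from `b` would decrease `⟪a, b⟫`. -/
lemma IsSphConvexBody.supports_of_inner_le {a b : Esp n} (hC : IsSphConvexBody C)
    (ha : ‖a‖ = 1) (haC : a ∈ innerDual C) (hb : ‖b‖ = 1) (hbC : b ∈ innerDual C)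
    (hab : ⟪a, b⟫ < 0) (hmin : ∀ w, ‖w‖ = 1 → w ∈ innerDual C → ⟪a, b⟫ ≤ ⟪w, b⟫) :
    Supports a C := by
  have hb0 : b ≠ 0 := ne_zero_of_norm_ne_zero (by simp [hb])
  obtain ⟨x₁, hx₁, hx₁b⟩ := hC.exists_inner_pos hb0 hbC
  have hab' := hC.neg_one_lt_inner ha haC hb hbC
  obtain ⟨t, ht0, hw, x, hx, hx0⟩ :=
    exists_touching_sub_smul hC.2.1.1 hC.isCompact hb haC hx₁ hx₁b
  rcases ht0.eq_or_lt with rfl | ht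
  · rw [zero_smul, sub_zero] at hw hx0
    exact (supports_iff hC.2.1.1).mpr ⟨ha, hw, x, hx, hx0⟩
  have hw0 : a - t • b ≠ 0 := fun h => by
    rcases eq_or_eq_neg_of_eq_smul ha hb (sub_eq_zero.mp h) with rfl | rfl
    · rw [real_inner_self_eq_norm_sq, ha] at hab; linarith
    · rw [inner_neg_left, real_inner_self_eq_norm_sq, hb] at hab'; linarith
  have hwn : ‖a - t • b‖ ≤ 1 + t := by
    refine (norm_sub_le _ _).trans ?_
    rw [ha, norm_smul, hb, mul_one, Real.norm_of_nonneg ht0]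
  have hwpos : 0 < ‖a - t • b‖ := norm_pos_iff.mpr hw0
  have h := hmin (‖a - t • b‖⁻¹ • (a - t • b)) (norm_smul_inv_norm hw0)
    (inv_norm_smul_mem_innerDual hw)
  rw [real_inner_smul_left, inner_sub_left, real_inner_smul_left, real_inner_self_eq_norm_sq, hb,
    one_pow, mul_one, inv_mul_eq_div, le_div_iff₀ hwpos] at h
  nlinarith

lemma IsSphConvexBody.neg_cos_thickness_le_inner (hC : IsSphConvexBody C)
    (hΔ : thickness C ≤ π / 2) {u u' : Esp n} (hu : ‖u‖ = 1) (huC : u ∈ innerDual C)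
    (hu' : ‖u'‖ = 1) (hu'C : u' ∈ innerDual C) : -cos (thickness C) ≤ ⟪u, u'⟫ := by
  have hcos : 0 ≤ cos (thickness C) :=
    cos_nonneg_of_mem_Icc ⟨by linarith [thickness_nonneg C, pi_pos], hΔ⟩
  set K := unitSphere n ∩ (innerDual C : Set (Esp n))
  have hK : IsCompact K := (isCompact_sphere 0 1).inter_right (innerDual C).isClosed
  obtain ⟨⟨a, b⟩, hmem, hmin⟩ := (hK.prod hK).exists_isMinOn
    ⟨(u, u'), ⟨mem_unitSphere_iff.mpr hu, huC⟩, ⟨mem_unitSphere_iff.mpr hu', hu'C⟩⟩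
    (continuous_inner (𝕜 := ℝ) (E := Esp n)).continuousOn
  obtain ⟨⟨ha, haC⟩, hb, hbC⟩ :
    (a ∈ unitSphere n ∧ a ∈ innerDual C) ∧ b ∈ unitSphere n ∧ b ∈ innerDual C := hmem
  rw [mem_unitSphere_iff] at ha hb
  have hmin' : ∀ w, ‖w‖ = 1 → w ∈ innerDual C → ∀ w', ‖w'‖ = 1 → w' ∈ innerDual C →
      ⟪a, b⟫ ≤ ⟪w, w'⟫ := fun w hw hwC w' hw' hw'C =>
    isMinOn_iff.mp hmin (w, w')
      ⟨⟨mem_unitSphere_iff.mpr hw, hwC⟩, ⟨mem_unitSphere_iff.mpr hw', hw'C⟩⟩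
  refine le_trans ?_ (hmin' u hu huC u' hu' hu'C)
  rcases le_or_gt 0 ⟪a, b⟫ with hab | hab
  · linarith
  have hSa := hC.supports_of_inner_le ha haC hb hbC hab fun w hw hwC => hmin' w hw hwC b hb hbC
  have hSb := hC.supports_of_inner_le hb hbC ha haC (by rwa [real_inner_comm]) fun w hw hwC => by
    rw [real_inner_comm a b]; exact hmin' w hw hwC a ha haC
  have hab' := hC.neg_one_lt_inner ha haC hb hbC
  have habs : |⟪a, b⟫| < 1 := abs_lt.mpr ⟨hab', by linarith⟩
  obtain ⟨hne, hne'⟩ := (abs_inner_lt_one_iff ha hb).mp habs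
  have h := thickness_le_luneThickness hSa hSb hne hne'
  rw [luneThickness_eq ha hb habs] at h
  have := cos_le_cos_of_nonneg_of_le_pi (thickness_nonneg C) (arccos_le_pi _) h
  rw [cos_arccos (by linarith) (by linarith)] at this
  linarith

lemma IsSphConvexBody.neg_cos_thickness_le_inner_of_norm_le_one (hC : IsSphConvexBody C)
    (hΔ : thickness C ≤ π / 2) {u u' : Esp n} (hu : ‖u‖ ≤ 1) (huC : u ∈ innerDual C)
    (hu' : ‖u'‖ ≤ 1) (hu'C : u' ∈ innerDual C) : -cos (thickness C) ≤ ⟪u, u'⟫ := by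
  have hcos : 0 ≤ cos (thickness C) :=
    cos_nonneg_of_mem_Icc ⟨by linarith [thickness_nonneg C, pi_pos], hΔ⟩
  rcases eq_or_ne u 0 with rfl | hu0
  · rw [inner_zero_left]; linarith
  rcases eq_or_ne u' 0 with rfl | hu'0
  · rw [inner_zero_right]; linarith
  have h := hC.neg_cos_thickness_le_inner hΔ (u := ‖u‖⁻¹ • u) (u' := ‖u'‖⁻¹ • u')
    (norm_smul_inv_norm hu0) (inv_norm_smul_mem_innerDual huC)
    (norm_smul_inv_norm hu'0) (inv_norm_smul_mem_innerDual hu'C)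
  rw [real_inner_smul_left, real_inner_smul_right] at h
  have hpos : 0 < ‖u‖ * ‖u'‖ := by positivity
  have hscale : ⟪u, u'⟫ = (‖u‖ * ‖u'‖) * (‖u‖⁻¹ * (‖u'‖⁻¹ * ⟪u, u'⟫)) := by field_simp
  rw [hscale]
  nlinarith [mul_le_one₀ hu (norm_nonneg _) hu']

lemma IsSphConvexBody.thickness_le_pi_div_two (hn : 2 ≤ n) (hC : IsSphConvexBody C)
    (h : ∀ x ∈ C, ∀ y ∈ C, 0 ≤ ⟪x, y⟫) : thickness C ≤ π / 2 := by
  obtain ⟨x₁, hx₁, y₁, hy₁, hxy₁⟩ := hC.exists_inner_lt_one hn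
  -- a diametral pair `p, q` of `C`
  obtain ⟨⟨p, q⟩, ⟨hp, hq⟩, hmin⟩ := (hC.isCompact.prod hC.isCompact).exists_isMinOn
    ⟨(x₁, y₁), hx₁, hy₁⟩ (continuous_inner (𝕜 := ℝ) (E := Esp n)).continuousOn
  have hmin' : ∀ x ∈ C, ∀ y ∈ C, ⟪p, q⟫ ≤ ⟪x, y⟫ :=
    fun x hx y hy => isMinOn_iff.mp hmin (x, y) ⟨hx, hy⟩
  have hpn : ‖p‖ = 1 := mem_unitSphere_iff.mp (hC.2.1.1 hp)
  have hqn : ‖q‖ = 1 := mem_unitSphere_iff.mp (hC.2.1.1 hq)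
  have hc0 : 0 ≤ ⟪p, q⟫ := h p hp q hq
  have habs : |⟪p, q⟫| < 1 :=
    abs_lt.mpr ⟨by linarith, (hmin' x₁ hx₁ y₁ hy₁).trans_lt hxy₁⟩
  have hSp := supports_luneFaceCenter hC.2.1.1 hp hqn habs hc0 fun x hx => hmin' x hx q hq
  have hSq := supports_luneFaceCenter hC.2.1.1 hq hpn (real_inner_comm p q ▸ habs)
    (real_inner_comm p q ▸ hc0) fun x hx => real_inner_comm p q ▸ hmin' x hx p hp
  have hab := inner_luneFaceCenter hpn hqn habs
  have habs' : |⟪luneFaceCenter p q, luneFaceCenter q p⟫| < 1 := by rwa [hab, abs_neg]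
  have ha := norm_luneFaceCenter hpn hqn habs
  have hb := norm_luneFaceCenter hqn hpn (real_inner_comm p q ▸ habs)
  obtain ⟨hne, hne'⟩ := (abs_inner_lt_one_iff ha hb).mp habs'
  calc thickness C ≤ luneThickness (luneFaceCenter p q) (luneFaceCenter q p) :=
        thickness_le_luneThickness hSp hSq hne hne'
    _ = arccos ⟪p, q⟫ := by rw [luneThickness_eq ha hb habs', hab, neg_neg]
    _ ≤ π / 2 := arccos_le_pi_div_two.mpr hc0

lemma IsSphConvex.inner_combination_nonneg (hC : IsSphConvex C) {k x x' : Esp n}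
    (hk : k ∈ innerDual (C ∩ hemi p)) (hx : x ∈ C) (hx' : x' ∈ C) (hxp : ⟪x, p⟫ < 0)
    (hx'p : 0 < ⟪x', p⟫) : 0 ≤ -⟪x, p⟫ * ⟪x', k⟫ + ⟪x', p⟫ * ⟪x, k⟫ := by
  -- the point of the arc from `x'` to `x` on the boundary of `H(p)` lies in `C ∩ H(p)`
  set z := (-⟪x, p⟫) • x' + ⟪x', p⟫ • x
  have hzp : ⟪z, p⟫ = 0 := by
    simp only [z, inner_add_left, real_inner_smul_left]; ring
  have hz : z ≠ 0 := by
    intro hz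
    have h := (eq_inv_smul_iff₀ (neg_ne_zero.mpr hxp.ne)).mpr (eq_neg_of_add_eq_zero_left hz)
    rw [smul_neg, smul_smul, ← neg_smul] at h
    rcases eq_or_eq_neg_of_eq_smul (mem_unitSphere_iff.mp (hC.1 hx'))
      (mem_unitSphere_iff.mp (hC.1 hx)) h with rfl | rfl
    · linarith
    · exact hC.2.1 x hx hx'
  have hzC : ‖z‖⁻¹ • z ∈ C ∩ hemi p :=
    ⟨hC.2.2 x' hx' x hx ⟨_, _, (neg_pos.mpr hxp).le, hx'p.le, hz, rfl⟩,
      mem_hemi_iff.mpr ⟨norm_smul_inv_norm hz, by rw [real_inner_smul_left, hzp, mul_zero]⟩⟩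
  have h := mem_innerDual.mp hk hzC
  rw [real_inner_smul_left] at h
  have h' := (mul_nonneg_iff_of_pos_left (by positivity)).mp h
  simpa only [z, inner_add_left, real_inner_smul_left] using h'

lemma IsSphConvex.exists_sub_smul_mem_innerDual (hC : IsSphConvex C) (hp : p ∈ C) {k : Esp n}
    (hk : k ∈ innerDual (C ∩ hemi p)) : ∃ b : ℝ, 0 ≤ b ∧ k - b • p ∈ innerDual C := by
  have hmem : ∀ x ∈ C, 0 ≤ ⟪x, p⟫ → 0 ≤ ⟪x, k⟫ := fun x hx hxp =>
    mem_innerDual.mp hk ⟨hx, mem_hemi_iff.mpr ⟨mem_unitSphere_iff.mp (hC.1 hx), hxp⟩⟩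
  set S := insert 0 {r | ∃ x ∈ C, ⟪x, p⟫ < 0 ∧ r = ⟪x, k⟫ / ⟪x, p⟫}
  have hS : ∀ x' ∈ C, 0 < ⟪x', p⟫ → ∀ r ∈ S, r ≤ ⟪x', k⟫ / ⟪x', p⟫ := by
    intro x' hx' hx'p r hr
    rw [le_div_iff₀ hx'p]
    rcases hr with rfl | ⟨x, hx, hxp, rfl⟩
    · rw [zero_mul]; exact hmem x' hx' hx'p.le
    · rw [div_mul_eq_mul_div, div_le_iff_of_neg hxp]
      linarith [hC.inner_combination_nonneg hk hx hx' hxp hx'p]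
  have hpp : 0 < ⟪p, p⟫ := by
    rw [real_inner_self_eq_norm_sq, mem_unitSphere_iff.mp (hC.1 hp)]; norm_num
  have hbdd : BddAbove S := ⟨_, hS p hp hpp⟩
  refine ⟨sSup S, le_csSup hbdd (Set.mem_insert 0 _), mem_innerDual.mpr fun x hx => ?_⟩
  rw [inner_sub_right, real_inner_smul_right, sub_nonneg]
  rcases lt_trichotomy ⟪x, p⟫ 0 with hxp | hxp | hxp
  · exact (div_le_iff_of_neg hxp).mp (le_csSup hbdd (Set.mem_insert_of_mem _ ⟨x, hx, hxp, rfl⟩))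
  · rw [hxp, mul_zero]; exact hmem x hx hxp.ge
  · exact (le_div_iff₀ hxp).mp (csSup_le ⟨0, Set.mem_insert _ _⟩ (hS x hx hxp))

lemma norm_sub_smul_le_one {k : Esp n} {b : ℝ} (hk : ‖k‖ = 1) (hp : ‖p‖ = 1) (hb : 0 ≤ b)
    (hkp : 0 ≤ ⟪p, k - b • p⟫) : ‖k - b • p‖ ≤ 1 := by
  have h : ‖k‖ ^ 2 = ‖k - b • p‖ ^ 2 + 2 * (b * ⟪p, k - b • p⟫) + b ^ 2 := by
    conv_lhs => rw [← sub_add_cancel k (b • p)]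
    rw [norm_add_sq_real, real_inner_smul_right, real_inner_comm, norm_smul, hp,
      Real.norm_of_nonneg hb, mul_one]
  rw [hk] at h
  nlinarith [norm_nonneg (k - b • p), mul_nonneg hb hkp]

lemma IsSphConvexBody.thickness_le_luneThickness_of_inter_hemi (hC : IsSphConvexBody C)
    (hΔ : thickness C ≤ π / 2) (hp : p ∈ C) {k k' : Esp n} (hk : ‖k‖ = 1)
    (hkC : k ∈ innerDual (C ∩ hemi p)) (hk' : ‖k'‖ = 1) (hk'C : k' ∈ innerDual (C ∩ hemi p))
    (hne : k' ≠ k) (hne' : k' ≠ -k) : thickness C ≤ luneThickness k k' := by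
  have hpn : ‖p‖ = 1 := mem_unitSphere_iff.mp (hC.2.1.1 hp)
  obtain ⟨b, hb, hν⟩ := hC.2.1.exists_sub_smul_mem_innerDual hp hkC
  obtain ⟨b', hb', hν'⟩ := hC.2.1.exists_sub_smul_mem_innerDual hp hk'C
  have hνp : 0 ≤ ⟪p, k - b • p⟫ := mem_innerDual.mp hν hp
  have hν'p : 0 ≤ ⟪p, k' - b' • p⟫ := mem_innerDual.mp hν' hp
  have hνν' := hC.neg_cos_thickness_le_inner_of_norm_le_one hΔ
    (norm_sub_smul_le_one hk hpn hb hνp) hν (norm_sub_smul_le_one hk' hpn hb' hν'p) hν'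
  have hkk' : ⟪k, k'⟫ = ⟪k - b • p, k' - b' • p⟫ + b' * ⟪p, k - b • p⟫ + b * ⟪p, k' - b' • p⟫
      + b * b' := by
    conv_lhs => rw [← sub_add_cancel k (b • p), ← sub_add_cancel k' (b' • p)]
    simp only [inner_add_left, inner_add_right, real_inner_smul_left, real_inner_smul_right,
      real_inner_comm p, real_inner_self_eq_norm_sq, hpn]
    ring
  have habs : |⟪k, k'⟫| < 1 := (abs_inner_lt_one_iff hk hk').mpr ⟨hne, hne'⟩
  have hcos : -⟪k, k'⟫ ≤ cos (thickness C) := by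
    nlinarith [mul_nonneg hb' hνp, mul_nonneg hb hν'p, mul_nonneg hb hb']
  rw [luneThickness_eq hk hk' habs]
  calc thickness C = arccos (cos (thickness C)) :=
        (arccos_cos (thickness_nonneg C) (by linarith [pi_pos])).symm
    _ ≤ arccos (-⟪k, k'⟫) := arccos_le_arccos hcos

lemma IsSphConvex.supports_inter_hemi (hC : IsSphConvex C) (hp : p ∈ C) (hq : q ∈ C)
    (hpq : ⟪p, q⟫ < 0) : Supports p (C ∩ hemi p) := by
  have hpn : ‖p‖ = 1 := mem_unitSphere_iff.mp (hC.1 hp)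
  have hqn : ‖q‖ = 1 := mem_unitSphere_iff.mp (hC.1 hq)
  have habs : |⟪p, q⟫| < 1 := by
    refine (abs_inner_lt_one_iff hpn hqn).mpr ⟨?_, fun h => hC.2.1 p hp (h ▸ hq)⟩
    rintro rfl
    rw [real_inner_self_eq_norm_sq, hqn] at hpq
    linarith
  have hne := sub_inner_smul_ne_zero hpn hqn habs
  have hzn := norm_luneFaceCenter hpn hqn habs
  have hz0 : ⟪luneFaceCenter p q, p⟫ = 0 := by
    rw [real_inner_comm]; exact inner_luneFaceCenter_eq_zero hpn q
  have hzC : luneFaceCenter p q ∈ C := by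
    refine hC.2.2 p hp q hq (mem_arc_of_add_eq_smul (neg_nonneg.mpr hpq.le) zero_le_one
      (norm_pos_iff.mpr hne) hzn ?_)
    rw [luneFaceCenter, smul_inv_smul₀ (norm_ne_zero_iff.mpr hne)]
    module
  refine (supports_iff fun x hx => hC.1 hx.1).mpr
    ⟨hpn, mem_innerDual.mpr fun x hx => (mem_hemi_iff.mp hx.2).2, _, ⟨hzC, ?_⟩, hz0⟩
  exact mem_hemi_iff.mpr ⟨hzn, hz0.ge⟩

lemma IsSphConvexBody.exists_supports_inter_hemi_ne (hC : IsSphConvexBody C)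
    (hΔpos : 0 < thickness C) (hp : p ∈ C) : ∃ v, Supports v (C ∩ hemi p) ∧ v ≠ p ∧ v ≠ -p := by
  obtain ⟨k, k', hk, hk', hne, hne'⟩ := exists_supports_pair_of_thickness_pos hΔpos
  obtain ⟨v, hv, hvp, hvp'⟩ : ∃ v, Supports v C ∧ v ≠ p ∧ v ≠ -p := by
    by_cases hkp : k = p ∨ k = -p
    · rcases hkp with rfl | rfl
      · exact ⟨k', hk', hne, hne'⟩
      · exact ⟨k', hk', by rwa [neg_neg] at hne', hne⟩
    · exact ⟨k, hk, not_or.mp hkp⟩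
  obtain ⟨hvn, hvC, -⟩ := (supports_iff hC.2.1.1).mp hv
  have hZ := hC.inter_hemi hp
  have hpZ : p ∈ C ∩ hemi p := ⟨hp, mem_hemi_self (mem_unitSphere_iff.mp (hC.2.1.1 hp))⟩
  exact exists_supports_ne hZ.2.1.1 hZ.isCompact hpZ hvn
    (innerDual_le_innerDual Set.inter_subset_left hvC) hvp hvp'

lemma IsSphConvexBody.thickness_le_thickness_inter_hemi (hC : IsSphConvexBody C)
    (hΔ : thickness C ≤ π / 2) (hΔpos : 0 < thickness C) (hp : p ∈ C) (hq : q ∈ C)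
    (hpq : ⟪p, q⟫ < 0) : thickness C ≤ thickness (C ∩ hemi p) := by
  have hZs : C ∩ hemi p ⊆ unitSphere n := fun x hx => hC.2.1.1 hx.1
  have hpn : ‖p‖ = 1 := mem_unitSphere_iff.mp (hC.2.1.1 hp)
  have hpZ : p ∈ C ∩ hemi p := ⟨hp, mem_hemi_self hpn⟩
  have hSp := hC.2.1.supports_inter_hemi hp hq hpq
  refine le_thickness (fun k hk => ?_) ⟨p, hSp⟩ fun k k' hk hk' hne hne' => ?_
  · rcases eq_or_ne k p with rfl | hkp
    · exact hC.exists_supports_inter_hemi_ne hΔpos hp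
    refine ⟨p, hSp, Ne.symm hkp, fun h => ?_⟩
    obtain ⟨hkn, hkZ, -⟩ := (supports_iff hZs).mp hk
    have := mem_innerDual.mp hkZ hpZ
    rw [h, inner_neg_left, real_inner_self_eq_norm_sq, hkn] at this
    linarith
  · obtain ⟨hkn, hkZ, -⟩ := (supports_iff hZs).mp hk
    obtain ⟨hk'n, hk'Z, -⟩ := (supports_iff hZs).mp hk'
    exact hC.thickness_le_luneThickness_of_inter_hemi hΔ hp hkn hkZ hk'n hk'Z hne hne'

lemma IsReduced.inner_nonneg (hR : IsReduced C) (hΔ : thickness C ≤ π / 2) (hp : p ∈ C)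
    (hq : q ∈ C) : 0 ≤ ⟪p, q⟫ := by
  by_contra! hpq
  have hqZ : q ∉ C ∩ hemi p := fun h => by
    linarith [real_inner_comm p q ▸ (mem_hemi_iff.mp h.2).2]
  have hlt := hR.2 _ (hR.1.inter_hemi hp) Set.inter_subset_left fun h => hqZ (by rwa [h])
  linarith [hR.1.thickness_le_thickness_inter_hemi hΔ ((thickness_nonneg _).trans_lt hlt) hp hq hpq]

end SphericalGeom

/-- For a reduced spherically convex body `R ⊂ S^d`,
`Δ(R) > π/2 ↔ diam(R) > π/2`. -/
theorem reduced_thickness_gt_iff_sdiam_gt (d : ℕ) (hd : 2 ≤ d)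
    (R : Set (Esp (d + 1))) (hR : IsReduced R) :
    Real.pi / 2 < thickness R ↔ Real.pi / 2 < sdiam R := by
  rw [← not_le, ← not_le, not_iff_not, sdiam_le_pi_div_two_iff]
  exact ⟨fun hΔ x hx y hy => hR.inner_nonneg hΔ hx hy, hR.1.thickness_le_pi_div_two (by omega)⟩
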